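/- arXiv:1909.13262 — 5 statements merged into one kernel-verified Lean document; each statement's English description precedes it below -/
import Mathlib

section
/- Let K be a field of characteristic 0, R an integral domain over K, and δ a locally nilpotent derivation of R. If a, b ∈ R are nonzero and δ(ab) = 0, then δ(a) = 0 and δ(b) = 0 (the kernel of δ is factorially closed). -/
private theorem lnd_leibniz_iter
    {K R : Type*} [Field K] [Ring R] [Algebra K R]
    (δ : R →ₗ[K] R) (hleib : ∀ a b : R, δ (a * b) = δ a * b + a * δ b)
    (n : ℕ) (a b : R) :
    (δ ^ n) (a * b) =
      ∑ k ∈ Finset.range (n + 1), n.choose k • ((δ ^ k) a * (δ ^ (n - k)) b) := by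
  induction n with
  | zero => simp
  | succ n ih =>
    rw [pow_succ', Module.End.mul_apply, ih, map_sum]
    have hterm : ∀ k, δ (n.choose k • ((δ ^ k) a * (δ ^ (n - k)) b)) =
        n.choose k • ((δ ^ (k+1)) a * (δ ^ (n - k)) b)
        + n.choose k • ((δ ^ k) a * (δ ^ (n - k + 1)) b) := by
      intro k
      rw [map_nsmul, hleib, smul_add, pow_succ', pow_succ']
      rfl
    rw [Finset.sum_congr rfl fun k _ => hterm k, Finset.sum_add_distrib]
    -- shift index in first sum
    have h1 : ∑ k ∈ Finset.range (n + 1), n.choose k • ((δ ^ (k+1)) a * (δ ^ (n - k)) b)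
        = ∑ k ∈ Finset.range (n + 2), (if k = 0 then 0 else n.choose (k-1)) •
            ((δ ^ k) a * (δ ^ (n + 1 - k)) b) := by
      rw [Finset.sum_range_succ' (fun k => (if k = 0 then 0 else n.choose (k-1)) •
            ((δ ^ k) a * (δ ^ (n + 1 - k)) b)) (n+1)]
      simp only [Nat.succ_ne_zero, if_false, ite_false, reduceIte, zero_smul, add_zero,
        Nat.succ_sub_succ_eq_sub, Nat.sub_zero]
    have h2 : ∑ k ∈ Finset.range (n + 1), n.choose k • ((δ ^ k) a * (δ ^ (n - k + 1)) b)
        = ∑ k ∈ Finset.range (n + 2), n.choose k • ((δ ^ k) a * (δ ^ (n + 1 - k)) b) := by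
      symm
      rw [Finset.sum_range_succ, Nat.choose_eq_zero_of_lt (Nat.lt_succ_self n), zero_smul,
        add_zero]
      symm
      apply Finset.sum_congr rfl
      intro k hk
      have hk' : k ≤ n := Nat.lt_succ_iff.mp (Finset.mem_range.mp hk)
      have : n - k + 1 = n + 1 - k := by omega
      rw [this]
    rw [h1, h2, ← Finset.sum_add_distrib]
    apply Finset.sum_congr rfl
    intro k hk
    rw [← add_smul]
    congr 1
    rcases Nat.eq_zero_or_pos k with h | h
    · subst h; simp
    · obtain ⟨j, rfl⟩ : ∃ j, k = j + 1 := ⟨k - 1, by omega⟩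
      rw [if_neg (Nat.succ_ne_zero j)]
      simp [Nat.choose_succ_succ, Nat.add_comm]

/-- The kernel of a locally nilpotent derivation of a domain over a field of
characteristic 0 is factorially closed. -/
theorem lnd_kernel_factorially_closed
    {K R : Type*} [Field K] [CharZero K] [Ring R] [IsDomain R] [Algebra K R]
    (δ : R →ₗ[K] R) (hleib : ∀ a b : R, δ (a * b) = δ a * b + a * δ b)
    (hln : ∀ r : R, ∃ n : ℕ, (δ ^ n) r = 0)
    (a b : R) (ha : a ≠ 0) (hb : b ≠ 0) (hab : δ (a * b) = 0) :
    δ a = 0 ∧ δ b = 0 := by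
  -- R has characteristic zero
  have hchar : CharZero R := charZero_of_injective_algebraMap (algebraMap K R).injective
  -- minimal m with δ^(m+1) a = 0
  obtain ⟨ma, hma⟩ := hln a
  obtain ⟨mb, hmb⟩ := hln b
  have hkill : ∀ (r : R) (n : ℕ), (δ ^ n) r = 0 → ∀ j, n ≤ j → (δ ^ j) r = 0 := by
    intro r n h j hj
    obtain ⟨d, rfl⟩ := Nat.exists_eq_add_of_le hj
    rw [add_comm, pow_add, Module.End.mul_apply, h, map_zero]
  -- take minimal exponents
  classical
  have hexa : ∃ n, (δ ^ (n+1)) a = 0 := ⟨ma, hkill a ma hma _ (Nat.le_succ _)⟩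
  have hexb : ∃ n, (δ ^ (n+1)) b = 0 := ⟨mb, hkill b mb hmb _ (Nat.le_succ _)⟩
  set m := Nat.find hexa with hm
  set n := Nat.find hexb with hn
  have hma1 : (δ ^ (m+1)) a = 0 := Nat.find_spec hexa
  have hmb1 : (δ ^ (n+1)) b = 0 := Nat.find_spec hexb
  have hane : (δ ^ m) a ≠ 0 := by
    rcases Nat.eq_zero_or_pos m with h | h
    · rw [h]; simpa using ha
    · have h2 := Nat.find_min hexa (m := m - 1) (by omega)
      rwa [Nat.sub_add_cancel h] at h2
  have hbne : (δ ^ n) b ≠ 0 := by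
    rcases Nat.eq_zero_or_pos n with h | h
    · rw [h]; simpa using hb
    · have h2 := Nat.find_min hexb (m := n - 1) (by omega)
      rwa [Nat.sub_add_cancel h] at h2
  -- δ^(m+n)(a*b) has only the middle term
  have hsum := lnd_leibniz_iter δ hleib (m + n) a b
  have hmid : (δ ^ (m + n)) (a * b) = (m+n).choose m • ((δ ^ m) a * (δ ^ n) b) := by
    rw [hsum]
    rw [Finset.sum_eq_single m]
    · rw [Nat.add_sub_cancel_left]
    · intro k hk hkm
      rcases Nat.lt_or_ge k m with h | h
      · -- then m + n - k ≥ n + 1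
        have : (δ ^ (m + n - k)) b = 0 := hkill b (n+1) hmb1 _ (by omega)
        rw [this, mul_zero, smul_zero]
      · have hkm' : m + 1 ≤ k := by omega
        have : (δ ^ k) a = 0 := hkill a (m+1) hma1 _ hkm'
        rw [this, zero_mul, smul_zero]
    · intro h
      exact absurd (Finset.mem_range.mpr (by omega)) h
  -- if m + n > 0 then δ^(m+n)(a*b) = 0, contradiction
  have hmn : m + n = 0 := by
    by_contra h
    have h1 : 1 ≤ m + n := Nat.one_le_iff_ne_zero.mpr h
    have hz : (δ ^ (m + n)) (a * b) = 0 := by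
      have : (δ ^ 1) (a * b) = 0 := by simpa using hab
      exact hkill _ 1 this _ h1
    rw [hmid] at hz
    have hc : ((m+n).choose m : R) ≠ 0 :=
      Nat.cast_ne_zero.mpr (Nat.choose_pos (Nat.le_add_right m n)).ne'
    rw [nsmul_eq_mul] at hz
    exact hane (by
      rcases mul_eq_zero.mp hz with h' | h'
      · exact absurd h' hc
      · rcases mul_eq_zero.mp h' with h'' | h''
        · exact h''
        · exact absurd h'' hbne)
  have hm0 : m = 0 := by omega
  have hn0 : n = 0 := by omega
  constructor
  · have := hma1; rw [hm0] at this; simpa using this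
  · have := hmb1; rw [hn0] at this; simpa using this
end

section
/- Let K be a field of characteristic 0 and let f, g ∈ K[X] ⊆ K⟨X,Y⟩ with f ≠ 0. Set T₁ = YX − XY. If g(X)·T₁·f(X) = f(X)·T₁·g(X) in the free algebra K⟨X,Y⟩, then g = αf for some α ∈ K. -/
open Polynomial

lemma aeval_matrix_diagonal {K R : Type*} [CommSemiring K] [CommSemiring R] [Algebra K R]
    {n : Type*} [Fintype n] [DecidableEq n] (d : n → R) (p : Polynomial K) :
    Polynomial.aeval (Matrix.diagonal d) p
      = Matrix.diagonal (fun i => Polynomial.aeval (d i) p) := by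
  have h1 : Matrix.diagonal d = Matrix.diagonalAlgHom (n := n) (α := R) K d := rfl
  rw [h1, Polynomial.aeval_algHom_apply]
  simp only [Matrix.diagonalAlgHom_apply]
  have h2 : Polynomial.aeval d p = fun i => Polynomial.aeval (d i) p :=
    funext fun i => (Polynomial.aeval_algHom_apply (Pi.evalAlgHom K (fun _ => R) i) d p).symm
  rw [h2]

/-- If `f, g ∈ K[X] ⊆ K⟨X,Y⟩`, `f ≠ 0`, and `g(X)·T₁·f(X) = f(X)·T₁·g(X)`
where `T₁ = YX - XY`, then `g = α f` for some `α ∈ K`. -/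
theorem gT1f_eq_fT1g_implies_proportional
    {K : Type*} [Field K] [CharZero K]
    (f g : Polynomial K) (hf : f ≠ 0)
    (X Y T₁ : FreeAlgebra K (Fin 2))
    (hX : X = FreeAlgebra.ι K 0) (hY : Y = FreeAlgebra.ι K 1)
    (hT₁ : T₁ = Y * X - X * Y)
    (h : (Polynomial.aeval X g) * T₁ * (Polynomial.aeval X f) =
         (Polynomial.aeval X f) * T₁ * (Polynomial.aeval X g)) :
    ∃ α : K, g = α • f := by
  classical
  set s : Polynomial (Polynomial K) := Polynomial.C Polynomial.X with hs
  set t : Polynomial (Polynomial K) := Polynomial.X with ht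
  set d : Fin 2 → Polynomial (Polynomial K) := ![s, t] with hd
  set M : Matrix (Fin 2) (Fin 2) (Polynomial (Polynomial K)) := Matrix.diagonal d with hM
  set E : Matrix (Fin 2) (Fin 2) (Polynomial (Polynomial K)) := Matrix.single 0 1 1 with hE
  set φ : FreeAlgebra K (Fin 2) →ₐ[K] Matrix (Fin 2) (Fin 2) (Polynomial (Polynomial K)) :=
    FreeAlgebra.lift K ![M, E] with hφ
  have hφX : φ X = M := by simp [hX, hφ]
  have hφY : φ Y = E := by simp [hY, hφ]
  have key := congrArg φ h
  simp only [map_mul, map_sub, hT₁, hφX, hφY,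
    ← Polynomial.aeval_algHom_apply] at key
  rw [hM] at key
  simp only [aeval_matrix_diagonal] at key
  have key01 := congrArg (fun m => m 0 1) key
  simp only [Matrix.sub_mul, Matrix.mul_sub, Matrix.sub_apply,
    Matrix.mul_apply, Fin.sum_univ_two, hE, hd,
    Matrix.diagonal_apply_eq, Matrix.diagonal_apply_ne, Matrix.single,
    Matrix.of_apply, Matrix.cons_val_zero, Matrix.cons_val_one, Matrix.head_cons] at key01
  norm_num at key01
  have hts : t - s ≠ 0 := by
    rw [ht, hs]
    intro hc
    have h1 := congrArg (fun q => Polynomial.coeff q 1) hc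
    simp [Polynomial.coeff_C] at h1
  have h2 : (t - s) * (Polynomial.aeval s g * Polynomial.aeval t f) =
      (t - s) * (Polynomial.aeval s f * Polynomial.aeval t g) := by
    linear_combination key01
  have h3 := mul_left_cancel₀ hts h2
  have hC : algebraMap K (Polynomial (Polynomial K)) = (Polynomial.C).comp (Polynomial.C) := by
    rw [IsScalarTower.algebraMap_eq K (Polynomial K) (Polynomial (Polynomial K)), Polynomial.algebraMap_eq,
      Polynomial.algebraMap_eq]
  have hsg : ∀ p : Polynomial K, Polynomial.aeval s p = Polynomial.C p := by
    intro p
    rw [hs, Polynomial.aeval_def, hC, ← Polynomial.hom_eval₂, Polynomial.eval₂_C_X]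
  have htf : ∀ p : Polynomial K, Polynomial.aeval t p = p.map Polynomial.C := by
    intro p
    rw [ht, Polynomial.aeval_def, hC]
    rfl
  rw [hsg, hsg, htf, htf] at h3
  have h4 : g * Polynomial.C (f.coeff f.natDegree)
      = f * Polynomial.C (g.coeff f.natDegree) := by
    have h5 := congrArg (fun q => Polynomial.coeff q f.natDegree) h3
    simpa only [Polynomial.coeff_C_mul, Polynomial.coeff_map] using h5
  have hfm : f.coeff f.natDegree ≠ 0 := by
    rw [← Polynomial.leadingCoeff]
    exact Polynomial.leadingCoeff_ne_zero.mpr hf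
  have ha : Polynomial.C (f.coeff f.natDegree) ≠ (0 : Polynomial K) := by
    simpa using hfm
  refine ⟨g.coeff f.natDegree / f.coeff f.natDegree, ?_⟩
  have hba : Polynomial.C (g.coeff f.natDegree / f.coeff f.natDegree) *
      Polynomial.C (f.coeff f.natDegree) = Polynomial.C (g.coeff f.natDegree) := by
    rw [← map_mul, div_mul_cancel₀ _ hfm]
  apply mul_right_cancel₀ ha
  rw [Polynomial.smul_eq_C_mul, mul_comm (Polynomial.C _) f, mul_assoc, hba, h4]
end

section
/- Let K be a field of characteristic 0 and Δ the derivation of K⟨X,Y⟩ with Δ(X) = 0 and Δ(Y) = 1. If L ∈ K⟨X,Y⟩ satisfies Δ(L) = 0, then L lies in the subalgebra of K⟨X,Y⟩ generated by X and the elements T_i, i ≥ 1, where T₁ = YX − XY and T_{i+1} = YT_i − T_iY. -/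
open FreeAlgebra

/-- `Ti 0 = T₁ = YX - XY` and `Ti (n+1) = T_{n+2} = Y (Ti n) - (Ti n) Y`. -/
noncomputable def Ti (K : Type*) [Field K] : ℕ → FreeAlgebra K (Fin 2)
  | 0 => ι K 1 * ι K 0 - ι K 0 * ι K 1
  | (n + 1) => ι K 1 * Ti K n - Ti K n * ι K 1

set_option linter.unusedSectionVars false

section Aux

variable {K : Type*} [Field K] [CharZero K]
  (Δ : FreeAlgebra K (Fin 2) →ₗ[K] FreeAlgebra K (Fin 2))
  (hleib : ∀ a b : FreeAlgebra K (Fin 2), Δ (a * b) = Δ a * b + a * Δ b)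
  (hΔX : Δ (ι K (0 : Fin 2)) = 0) (hΔY : Δ (ι K (1 : Fin 2)) = 1)

local notation "A" => FreeAlgebra K (Fin 2)
local notation "Xv" => ι K (0 : Fin 2)
local notation "Yv" => ι K (1 : Fin 2)
local notation "B" => Algebra.adjoin K ({ι K (0 : Fin 2)} ∪ Set.range (Ti K))

include hleib in
lemma aux_one : Δ 1 = 0 := by
  have h := hleib 1 1
  rw [one_mul, one_mul, mul_one] at h
  exact (left_eq_add.mp h)

include hleib hΔX hΔY in
lemma aux_Ti : ∀ n, Δ (Ti K n) = 0 := by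
  intro n
  induction n with
  | zero => simp [Ti, hleib, hΔX, hΔY]
  | succ m ih => simp [Ti, hleib, hΔY, ih]

include hleib hΔX hΔY in
lemma aux_B_const : ∀ b ∈ B, Δ b = 0 := by
  intro b hb
  induction hb using Algebra.adjoin_induction with
  | mem x hx =>
    rcases hx with hx | ⟨n, rfl⟩
    · rw [Set.mem_singleton_iff] at hx; rw [hx]; exact hΔX
    · exact aux_Ti Δ hleib hΔX hΔY n
  | algebraMap r =>
    rw [Algebra.algebraMap_eq_smul_one, map_smul, aux_one Δ hleib, smul_zero]
  | add x y hx hy ihx ihy => rw [map_add, ihx, ihy, add_zero]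
  | mul x y hx hy ihx ihy => rw [hleib, ihx, ihy, zero_mul, mul_zero, add_zero]

lemma aux_comm : ∀ b ∈ B, Yv * b - b * Yv ∈ B := by
  intro b hb
  induction hb using Algebra.adjoin_induction with
  | mem x hx =>
    rcases hx with hx | ⟨n, rfl⟩
    · rw [Set.mem_singleton_iff] at hx; rw [hx]
      exact Algebra.subset_adjoin (Or.inr ⟨0, rfl⟩)
    · exact Algebra.subset_adjoin (Or.inr ⟨n + 1, rfl⟩)
  | algebraMap r =>
    rw [Algebra.algebraMap_eq_smul_one, mul_smul_comm, smul_mul_assoc, one_mul, mul_one,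
      sub_self]
    exact zero_mem _
  | add x y hx hy ihx ihy =>
    have : Yv * (x + y) - (x + y) * Yv = (Yv * x - x * Yv) + (Yv * y - y * Yv) := by
      noncomm_ring
    rw [this]; exact add_mem ihx ihy
  | mul x y hx hy ihx ihy =>
    have : Yv * (x * y) - (x * y) * Yv
        = (Yv * x - x * Yv) * y + x * (Yv * y - y * Yv) := by noncomm_ring
    rw [this]; exact add_mem (mul_mem ihx hy) (mul_mem hx ihy)

/-- The span of the elements `b * Y^n`, `b ∈ B`. -/
noncomputable def auxM (K : Type*) [Field K] [CharZero K] :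
    Submodule K (FreeAlgebra K (Fin 2)) :=
  Submodule.span K {z | ∃ b ∈ Algebra.adjoin K ({ι K (0 : Fin 2)} ∪ Set.range (Ti K)),
    ∃ n : ℕ, z = b * (ι K (1 : Fin 2)) ^ n}

lemma aux_mem_M {b : A} (hb : b ∈ B) (n : ℕ) : b * Yv ^ n ∈ auxM K :=
  Submodule.subset_span ⟨b, hb, n, rfl⟩

lemma aux_M_mulY : ∀ x ∈ auxM K, x * Yv ∈ auxM K := by
  intro x hx
  induction hx using Submodule.span_induction with
  | mem z hz =>
    obtain ⟨b, hb, n, rfl⟩ := hz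
    rw [mul_assoc, ← pow_succ]
    exact aux_mem_M hb (n + 1)
  | zero => rw [zero_mul]; exact zero_mem _
  | add x y hx hy ihx ihy => rw [add_mul]; exact add_mem ihx ihy
  | smul c x hx ihx => rw [smul_mul_assoc]; exact Submodule.smul_mem _ _ ihx

lemma aux_M_mulYpow : ∀ m, ∀ x ∈ auxM K, x * Yv ^ m ∈ auxM K := by
  intro m
  induction m with
  | zero => intro x hx; rwa [pow_zero, mul_one]
  | succ m ih =>
    intro x hx
    rw [pow_succ, ← mul_assoc]
    exact aux_M_mulY _ (ih x hx)

lemma aux_M_mulB : ∀ b ∈ B, ∀ x ∈ auxM K, b * x ∈ auxM K := by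
  intro b hb x hx
  induction hx using Submodule.span_induction with
  | mem z hz =>
    obtain ⟨b', hb', n, rfl⟩ := hz
    rw [← mul_assoc]
    exact aux_mem_M (mul_mem hb hb') n
  | zero => rw [mul_zero]; exact zero_mem _
  | add x y hx hy ihx ihy => rw [mul_add]; exact add_mem ihx ihy
  | smul c x hx ihx => rw [mul_smul_comm]; exact Submodule.smul_mem _ _ ihx

lemma aux_Ypow_mulB : ∀ n, ∀ b ∈ B, Yv ^ n * b ∈ auxM K := by
  intro n
  induction n with
  | zero =>
    intro b hb
    rw [pow_zero, one_mul]
    have := aux_mem_M hb 0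
    rwa [pow_zero, mul_one] at this
  | succ m ih =>
    intro b hb
    have key : Yv ^ (m + 1) * b
        = (Yv ^ m * b) * Yv + Yv ^ m * (Yv * b - b * Yv) := by
      rw [pow_succ]; noncomm_ring
    rw [key]
    exact add_mem (aux_M_mulY _ (ih b hb)) (ih _ (aux_comm b hb))

lemma aux_M_mul : ∀ x ∈ auxM K, ∀ y ∈ auxM K, x * y ∈ auxM K := by
  intro x hx
  induction hx using Submodule.span_induction with
  | mem z hz =>
    obtain ⟨b, hb, n, rfl⟩ := hz
    intro y hy
    induction hy using Submodule.span_induction with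
    | mem w hw =>
      obtain ⟨b', hb', m, rfl⟩ := hw
      have : b * Yv ^ n * (b' * Yv ^ m) = b * ((Yv ^ n * b') * Yv ^ m) := by
        noncomm_ring
      rw [this]
      exact aux_M_mulB b hb _ (aux_M_mulYpow m _ (aux_Ypow_mulB n b' hb'))
    | zero => rw [mul_zero]; exact zero_mem _
    | add u v hu hv ihu ihv => rw [mul_add]; exact add_mem ihu ihv
    | smul c u hu ihu => rw [mul_smul_comm]; exact Submodule.smul_mem _ _ ihu
  | zero => intro y hy; rw [zero_mul]; exact zero_mem _
  | add u v hu hv ihu ihv =>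
    intro y hy; rw [add_mul]; exact add_mem (ihu y hy) (ihv y hy)
  | smul c u hu ihu =>
    intro y hy; rw [smul_mul_assoc]; exact Submodule.smul_mem _ _ (ihu y hy)

lemma aux_M_top : ∀ z : A, z ∈ auxM K := by
  intro z
  induction z using FreeAlgebra.induction with
  | grade0 r =>
    have := aux_mem_M (Subalgebra.algebraMap_mem B r) 0
    rwa [pow_zero, mul_one] at this
  | grade1 x =>
    fin_cases x
    · have := aux_mem_M (K := K) (Algebra.subset_adjoin (Or.inl rfl)) 0
      rwa [pow_zero, mul_one] at this
    · have := aux_mem_M (K := K) (one_mem B) 1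
      rwa [pow_one, one_mul] at this
  | mul a b ha hb => exact aux_M_mul a ha b hb
  | add a b ha hb => exact add_mem ha hb

include hleib hΔY in
lemma aux_ΔYpow : ∀ n : ℕ, Δ (Yv ^ n) = (n : K) • Yv ^ (n - 1) := by
  intro n
  induction n with
  | zero => simp [aux_one Δ hleib]
  | succ m ih =>
    cases m with
    | zero => simp [hΔY]
    | succ l =>
      rw [pow_succ, hleib, ih, hΔY, mul_one]
      simp only [Nat.add_sub_cancel]
      rw [smul_mul_assoc, ← pow_succ]
      push_cast
      module

include hleib hΔX hΔY in
lemma aux_iter {b : A} (hb : b ∈ B) :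
    ∀ (k n : ℕ), (Δ ^ k) (b * Yv ^ n)
      = ((n.descFactorial k : K)) • (b * Yv ^ (n - k)) := by
  intro k
  induction k with
  | zero => intro n; simp
  | succ j ih =>
    intro n
    rw [pow_succ', Module.End.mul_apply, ih n, map_smul, hleib,
      aux_B_const Δ hleib hΔX hΔY b hb, zero_mul, zero_add,
      aux_ΔYpow Δ hleib hΔY, mul_smul_comm, smul_smul,
      Nat.descFactorial_succ, Nat.sub_sub, Nat.cast_mul, mul_comm ((n - j : ℕ) : K)]

/-- The Taylor-type operator `x ↦ ∑ (-1)^k/k! Δ^k(x) Y^k`. -/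
noncomputable def auxPi {K : Type*} [Field K] [CharZero K]
    (Δ : FreeAlgebra K (Fin 2) →ₗ[K] FreeAlgebra K (Fin 2)) (N : ℕ)
    (x : FreeAlgebra K (Fin 2)) : FreeAlgebra K (Fin 2) :=
  ∑ k ∈ Finset.range (N + 1),
    ((-1 : K) ^ k * ((k.factorial : K))⁻¹) • ((Δ ^ k) x * (ι K (1 : Fin 2)) ^ k)

include hleib hΔX hΔY in
lemma aux_Pi_gen {b : A} (hb : b ∈ B) (n : ℕ) :
    ∀ m, n ≤ m → auxPi Δ m (b * Yv ^ n) ∈ B := by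
  intro m hm
  have hterm : ∀ k, ((-1 : K) ^ k * ((k.factorial : K))⁻¹) •
      ((Δ ^ k) (b * Yv ^ n) * Yv ^ k)
      = ((-1 : K) ^ k * (n.choose k : K)) • (b * Yv ^ n) := by
    intro k
    rw [aux_iter Δ hleib hΔX hΔY hb k n, smul_mul_assoc, smul_smul]
    by_cases hk : k ≤ n
    · rw [mul_assoc b, ← pow_add, Nat.sub_add_cancel hk, mul_assoc]
      congr 1
      rw [Nat.descFactorial_eq_factorial_mul_choose, Nat.cast_mul,
        inv_mul_cancel_left₀ (Nat.cast_ne_zero.mpr k.factorial_ne_zero)]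
    · rw [Nat.descFactorial_eq_zero_iff_lt.mpr (by omega),
        Nat.choose_eq_zero_of_lt (by omega)]
      simp
  have hsum : auxPi Δ m (b * Yv ^ n)
      = (∑ k ∈ Finset.range (m + 1), (-1 : K) ^ k * (n.choose k : K)) • (b * Yv ^ n) := by
    rw [auxPi, Finset.sum_smul]
    exact Finset.sum_congr rfl fun k _ => hterm k
  have hrestrict : (∑ k ∈ Finset.range (m + 1), (-1 : K) ^ k * (n.choose k : K))
      = (∑ k ∈ Finset.range (n + 1), (-1 : K) ^ k * (n.choose k : K)) := by
    symm
    apply Finset.sum_subset (Finset.range_subset_range.mpr (by omega))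
    intro k _ hk
    rw [Finset.mem_range, not_lt] at hk
    rw [Nat.choose_eq_zero_of_lt (by omega), Nat.cast_zero, mul_zero]
  have hval : (∑ k ∈ Finset.range (n + 1), (-1 : K) ^ k * (n.choose k : K))
      = if n = 0 then 1 else 0 := by
    have h := Int.alternating_sum_range_choose (n := n)
    calc ∑ k ∈ Finset.range (n + 1), (-1 : K) ^ k * (n.choose k : K)
        = ((∑ i ∈ Finset.range (n + 1), (-1 : ℤ) ^ i * (n.choose i : ℤ) : ℤ) : K) := by
          push_cast; rfl
      _ = ((if n = 0 then 1 else 0 : ℤ) : K) := by rw [h]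
      _ = if n = 0 then 1 else 0 := by split <;> simp
  rw [hsum, hrestrict, hval]
  cases n with
  | zero => rw [if_pos rfl, one_smul, pow_zero, mul_one]; exact hb
  | succ l =>
    rw [if_neg (by omega), zero_smul]
    exact zero_mem _

include hleib hΔX hΔY in
lemma aux_Pi_mem : ∀ x ∈ auxM K, ∃ N, ∀ m, N ≤ m → auxPi Δ m x ∈ B := by
  intro x hx
  induction hx using Submodule.span_induction with
  | mem z hz =>
    obtain ⟨b, hb, n, rfl⟩ := hz
    exact ⟨n, fun m hm => aux_Pi_gen Δ hleib hΔX hΔY hb n m hm⟩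
  | zero =>
    refine ⟨0, fun m _ => ?_⟩
    simp only [auxPi, map_zero, zero_mul, smul_zero, Finset.sum_const_zero]
    exact zero_mem _
  | add x y hx hy ihx ihy =>
    obtain ⟨N₁, h₁⟩ := ihx
    obtain ⟨N₂, h₂⟩ := ihy
    refine ⟨max N₁ N₂, fun m hm => ?_⟩
    have : auxPi Δ m (x + y) = auxPi Δ m x + auxPi Δ m y := by
      simp only [auxPi, map_add, add_mul, smul_add, Finset.sum_add_distrib]
    rw [this]
    exact add_mem (h₁ m (le_trans (le_max_left _ _) hm)) (h₂ m (le_trans (le_max_right _ _) hm))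
  | smul c x hx ihx =>
    obtain ⟨N, h⟩ := ihx
    refine ⟨N, fun m hm => ?_⟩
    have : auxPi Δ m (c • x) = c • auxPi Δ m x := by
      simp only [auxPi, map_smul, smul_mul_assoc, Finset.smul_sum, smul_comm c]
    rw [this]
    exact Subalgebra.smul_mem _ (h m hm) c

end Aux

/-- If `Δ X = 0`, `Δ Y = 1` and `Δ L = 0`, then `L` lies in the subalgebra of
`K⟨X,Y⟩` generated by `X` and the elements `T_i`, `i ≥ 1`. -/
theorem constants_of_partial_derivative
    {K : Type*} [Field K] [CharZero K]
    (Δ : FreeAlgebra K (Fin 2) →ₗ[K] FreeAlgebra K (Fin 2))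
    (hleib : ∀ a b : FreeAlgebra K (Fin 2), Δ (a * b) = Δ a * b + a * Δ b)
    (hΔX : Δ (ι K (0 : Fin 2)) = 0) (hΔY : Δ (ι K (1 : Fin 2)) = 1)
    (L : FreeAlgebra K (Fin 2)) (hL : Δ L = 0) :
    L ∈ Algebra.adjoin K ({ι K (0 : Fin 2)} ∪ Set.range (Ti K)) := by
  obtain ⟨N, hN⟩ := aux_Pi_mem Δ hleib hΔX hΔY L (aux_M_top L)
  have hiter : ∀ k, k ≠ 0 → (Δ ^ k) L = 0 := by
    intro k hk
    obtain ⟨j, rfl⟩ := Nat.exists_eq_succ_of_ne_zero hk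
    rw [pow_succ, Module.End.mul_apply, hL, map_zero]
  have hPiL : auxPi Δ N L = L := by
    rw [auxPi, Finset.sum_eq_single_of_mem 0 (Finset.mem_range.mpr (by omega))]
    · simp
    · intro k _ hk
      rw [hiter k hk, zero_mul, smul_zero]
  have := hN N le_rfl
  rwa [hPiL] at this
end

section
/- Let K be a field of characteristic 0, F = f(X) ∈ K[X] with deg_X(F) > 0, and define ⊡ on K⟨X,Y⟩ by ⊡(A) = YAF − FAY. Then ⊡(A) = 0 implies A = 0, i.e., ⊡ is injective. -/
open MonoidAlgebra FreeMonoid Finsupp Polynomial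

/-- A word ending in `0` cannot equal `d * of 1`. -/
lemma no_tail_one (w : FreeMonoid (Fin 2)) {n : ℕ} (hn : 0 < n) :
    ¬∃ d, of 1 * w * (of (0 : Fin 2)) ^ n = d * of 1 := by
  rintro ⟨d, hd⟩
  obtain ⟨m, rfl⟩ : ∃ m, n = m + 1 := ⟨n - 1, (Nat.succ_pred_eq_of_pos hn).symm⟩
  rw [pow_succ, ← mul_assoc] at hd
  have h := congrArg (fun x => (FreeMonoid.toList x).getLast?) hd
  simp only [toList_mul, toList_of] at h
  rw [List.getLast?_concat, List.getLast?_concat] at h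
  exact absurd (Option.some.inj h) (by decide)

lemma key1 {K : Type*} [Semiring K] (a : MonoidAlgebra K (FreeMonoid (Fin 2)))
    (w : FreeMonoid (Fin 2)) {j n : ℕ} (hj : j ≤ n) {r : K} :
    (((MonoidAlgebra.single (of 1) 1 * a) * MonoidAlgebra.single ((of (0 : Fin 2)) ^ j) r :
        MonoidAlgebra K (FreeMonoid (Fin 2)))).coeff
      (of 1 * w * (of (0 : Fin 2)) ^ n)
      = a.coeff (w * (of (0 : Fin 2)) ^ (n - j)) * r := by
  have hpow : (of (0 : Fin 2)) ^ (n - j) * (of (0 : Fin 2)) ^ j = (of (0 : Fin 2)) ^ n := by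
    rw [← pow_add, Nat.sub_add_cancel hj]
  rw [MonoidAlgebra.coeff_mul_single_eq_coeff_mul (of 1 * (w * (of (0 : Fin 2)) ^ (n - j)))
    (x := MonoidAlgebra.single (of 1) 1 * a)
    (fun c _ => by rw [← hpow]; rw [show of 1 * w * ((of (0:Fin 2))^(n-j) * (of (0:Fin 2))^j)
      = (of 1 * (w * (of (0:Fin 2))^(n-j))) * (of (0:Fin 2))^j by
        simp [mul_assoc]]; exact mul_left_inj _),
  ]
  rw [(MonoidAlgebra.coeff_single_mul_eq_mul_coeff (x := a) _ (fun c _ => mul_right_inj _)).trans (one_mul _)]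

/-- If `F = f(X)` with `deg f > 0`, the operator `⊡(A) = YAF - FAY` on
`K⟨X,Y⟩` is injective. -/
theorem box_injective_of_degree_pos
    {K : Type*} [Field K] [CharZero K]
    (f : Polynomial K) (hdeg : 0 < f.natDegree)
    (X Y F : FreeAlgebra K (Fin 2))
    (hX : X = FreeAlgebra.ι K 0) (hY : Y = FreeAlgebra.ι K 1)
    (hF : F = Polynomial.aeval X f) :
    ∀ A : FreeAlgebra K (Fin 2), Y * A * F - F * A * Y = 0 → A = 0 := by
  intro A hA
  by_contra hA0
  set e := FreeAlgebra.equivMonoidAlgebraFreeMonoid (R := K) (X := Fin 2) with he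
  have hι : ∀ i : Fin 2, e (FreeAlgebra.ι K i) = MonoidAlgebra.single (of i) 1 := by
    intro i
    simp [he, FreeAlgebra.equivMonoidAlgebraFreeMonoid, MonoidAlgebra.of_apply]
  set a : MonoidAlgebra K (FreeMonoid (Fin 2)) := e A with ha
  have ha0 : a ≠ 0 := fun h => hA0 (e.injective (by simpa [ha] using h))
  set x : MonoidAlgebra K (FreeMonoid (Fin 2)) := MonoidAlgebra.single (of (0 : Fin 2)) 1 with hx
  set y : MonoidAlgebra K (FreeMonoid (Fin 2)) := MonoidAlgebra.single (of (1 : Fin 2)) 1 with hy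
  -- the transported equation
  have heq : y * a * (aeval x f) = (aeval x f) * a * y := by
    have h1 : Y * A * F = F * A * Y := sub_eq_zero.mp hA
    have h2 := congrArg e h1
    rw [map_mul, map_mul, map_mul, map_mul] at h2
    have h3 := Polynomial.aeval_algHom_apply (AlgEquiv.toAlgHom e) (FreeAlgebra.ι K 0) f
    change aeval (e (FreeAlgebra.ι K 0)) f = e (aeval (FreeAlgebra.ι K 0) f) at h3
    rw [hY, hF, hX, hι, ← h3, hι, ← ha, ← hx, ← hy] at h2
    exact h2
  -- pick a word of maximal length in the support of a
  obtain ⟨w, hw, hmax⟩ := Finset.exists_max_image a.coeff.support FreeMonoid.length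
    (Finsupp.support_nonempty_iff.mpr (mt MonoidAlgebra.coeff_eq_zero.mp ha0))
  have hf0 : f ≠ 0 := fun h => by simp [h] at hdeg
  set n := f.natDegree with hn
  set u := of (1 : Fin 2) * w * (of (0 : Fin 2)) ^ n with hu
  -- expand F as a sum
  have hexp : (aeval x f : MonoidAlgebra K (FreeMonoid (Fin 2)))
      = ∑ j ∈ Finset.range (n + 1),
          MonoidAlgebra.single ((of (0 : Fin 2)) ^ j) (f.coeff j) := by
    rw [Polynomial.aeval_eq_sum_range]
    congr 1
    ext j
    rw [hx, MonoidAlgebra.single_pow, one_pow, MonoidAlgebra.smul_single', mul_one]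
  -- LHS coefficient at u
  have hL : (y * a * (aeval x f)).coeff u = f.coeff n * a.coeff w := by
    rw [hexp, Finset.mul_sum, MonoidAlgebra.coeff_sum, Finsupp.finset_sum_apply]
    rw [Finset.sum_eq_single_of_mem n (Finset.self_mem_range_succ n)]
    · rw [hy, hu, key1 a w le_rfl, Nat.sub_self, pow_zero, mul_one, mul_comm]
    · intro j hj hjn
      have hj' : j ≤ n := Nat.lt_succ_iff.mp (Finset.mem_range.mp hj)
      rw [hy, hu, key1 a w hj']
      have hns : w * (of (0 : Fin 2)) ^ (n - j) ∉ a.coeff.support := by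
        intro hmem
        have hle := hmax _ hmem
        rw [length_mul] at hle
        have hlen : length ((of (0 : Fin 2)) ^ (n - j)) = n - j := by
          induction (n - j) with
          | zero => simp
          | succ m ih => rw [pow_succ, length_mul, ih, length_of]
        omega
      rw [Finsupp.notMem_support_iff.mp hns, zero_mul]
  -- RHS coefficient at u
  have hR : ((aeval x f) * a * y).coeff u = 0 :=
    MonoidAlgebra.mul_single_apply_of_not_exists_mul _ _ (no_tail_one w hdeg)
  rw [heq, hR] at hL
  have hfn : f.coeff n ≠ 0 := by
    rw [hn, ← Polynomial.leadingCoeff]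
    exact Polynomial.leadingCoeff_ne_zero.mpr hf0
  exact Finsupp.mem_support_iff.mp hw ((mul_eq_zero.mp hL.symm).resolve_left hfn)
end

section
/- Let K be a field of characteristic 0, Δ₁ and Δ₂ derivations of K⟨X,Y⟩ with Δ₁(X) = Δ₂(X) = 0, Δ₁(Y) = f(X) and Δ₂(Y) = g(X) for polynomials f, g ∈ K[X] with f ≠ 0. If Δ₂ vanishes on T₂ = Y·T₁·f(X) − f(X)·T₁·Y, where T₁ = YX − XY, then Δ₂ = α·Δ₁ for some α ∈ K. -/
open Polynomial

section aux

variable {K : Type*} [Field K]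

local notation "R" => Polynomial (Polynomial K)

lemma aux_aeval_CX (p : Polynomial K) :
    aeval (C (X : Polynomial K) : R) p = C p := by
  have := Polynomial.aeval_algHom_apply (Polynomial.CAlgHom : Polynomial K →ₐ[K] R)
    (X : Polynomial K) p
  simpa [Polynomial.CAlgHom] using this

lemma aux_aeval_X (p : Polynomial K) :
    aeval (X : R) p = p.map (algebraMap K (Polynomial K)) := by
  rw [aeval_def, Polynomial.map]
  exact Polynomial.eval₂_congr (by ext x; simp [Polynomial.algebraMap_apply]) rfl rfl

lemma aux_sub_ne_zero : (X : R) - C (X : Polynomial K) ≠ 0 := by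
  intro hh
  have := congrArg (fun q => Polynomial.coeff q 1) hh
  simp [Polynomial.coeff_C] at this

end aux

/-- If `Δ₁ X = Δ₂ X = 0`, `Δ₁ Y = f(X) ≠ 0`, `Δ₂ Y = g(X)`, and `Δ₂` kills
`T₂ = Y T₁ f(X) - f(X) T₁ Y` (where `T₁ = YX - XY`), then `Δ₂ = α Δ₁` for some
`α ∈ K`. -/
theorem derivation_determined_by_constants_key_step
    {K : Type*} [Field K] [CharZero K]
    (Δ₁ Δ₂ : FreeAlgebra K (Fin 2) →ₗ[K] FreeAlgebra K (Fin 2))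
    (hleib₁ : ∀ a b : FreeAlgebra K (Fin 2), Δ₁ (a * b) = Δ₁ a * b + a * Δ₁ b)
    (hleib₂ : ∀ a b : FreeAlgebra K (Fin 2), Δ₂ (a * b) = Δ₂ a * b + a * Δ₂ b)
    (f g : Polynomial K) (hf : f ≠ 0)
    (X Y T₁ T₂ : FreeAlgebra K (Fin 2))
    (hX : X = FreeAlgebra.ι K 0) (hY : Y = FreeAlgebra.ι K 1)
    (hT₁ : T₁ = Y * X - X * Y)
    (hT₂ : T₂ = Y * T₁ * Polynomial.aeval X f - Polynomial.aeval X f * T₁ * Y)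
    (hΔ₁X : Δ₁ X = 0) (hΔ₂X : Δ₂ X = 0)
    (hΔ₁Y : Δ₁ Y = Polynomial.aeval X f) (hΔ₂Y : Δ₂ Y = Polynomial.aeval X g)
    (h : Δ₂ T₂ = 0) :
    ∃ α : K, Δ₂ = α • Δ₁ := by
  -- Δ 1 = 0 and Δ (algebraMap r) = 0 for any Leibniz map
  have hone : ∀ (Δ : FreeAlgebra K (Fin 2) →ₗ[K] FreeAlgebra K (Fin 2)),
      (∀ a b, Δ (a * b) = Δ a * b + a * Δ b) → Δ 1 = 0 := by
    intro Δ hleib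
    have h2 : Δ 1 = Δ 1 + Δ 1 := by simpa using hleib 1 1
    exact (left_eq_add.mp h2)
  have halg : ∀ (Δ : FreeAlgebra K (Fin 2) →ₗ[K] FreeAlgebra K (Fin 2)),
      (∀ a b, Δ (a * b) = Δ a * b + a * Δ b) →
      ∀ r : K, Δ (algebraMap K (FreeAlgebra K (Fin 2)) r) = 0 := by
    intro Δ hleib r
    rw [Algebra.algebraMap_eq_smul_one, map_smul, hone Δ hleib, smul_zero]
  -- Δ₂ vanishes on polynomials in X
  have hpow : ∀ n : ℕ, Δ₂ (X ^ n) = 0 := by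
    intro n
    induction n with
    | zero => simpa using hone Δ₂ hleib₂
    | succ n ih => rw [pow_succ, hleib₂, ih, hΔ₂X, zero_mul, mul_zero, add_zero]
  have haev : ∀ p : Polynomial K, Δ₂ (Polynomial.aeval X p) = 0 := by
    intro p
    induction p using Polynomial.induction_on' with
    | add p q hp hq => rw [map_add, map_add, hp, hq, add_zero]
    | monomial n a =>
        rw [Polynomial.aeval_monomial, hleib₂, hpow, halg Δ₂ hleib₂, zero_mul, mul_zero,
          add_zero]
  -- polynomials in X commute with X
  have hcomm : ∀ p : Polynomial K,
      Polynomial.aeval X p * X = X * Polynomial.aeval X p := by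
    intro p
    have h1 : Polynomial.aeval X (p * Polynomial.X) = Polynomial.aeval X (Polynomial.X * p) :=
      by rw [mul_comm]
    simpa [map_mul] using h1
  -- Δ₂ T₁ = 0
  have hT₁0 : Δ₂ T₁ = 0 := by
    rw [hT₁, map_sub, hleib₂, hleib₂, hΔ₂X, hΔ₂Y, mul_zero, add_zero, zero_mul, zero_add,
      hcomm g, sub_self]
  -- the key identity in the free algebra
  have key : Polynomial.aeval X g * T₁ * Polynomial.aeval X f
      = Polynomial.aeval X f * T₁ * Polynomial.aeval X g := by
    have e1 : Δ₂ (Y * T₁ * Polynomial.aeval X f)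
        = Polynomial.aeval X g * T₁ * Polynomial.aeval X f := by
      rw [hleib₂, haev, mul_zero, add_zero, hleib₂, hΔ₂Y, hT₁0, mul_zero, add_zero]
    have e2 : Δ₂ (Polynomial.aeval X f * T₁ * Y)
        = Polynomial.aeval X f * T₁ * Polynomial.aeval X g := by
      rw [hleib₂, hΔ₂Y, hleib₂, haev, hT₁0, zero_mul, mul_zero, add_zero, zero_mul, zero_add]
    have := h
    rw [hT₂, map_sub, e1, e2, sub_eq_zero] at this
    exact this
  -- push through a matrix representation
  set R := Polynomial (Polynomial K) with hR
  set u : R := Polynomial.C Polynomial.X with hu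
  set v : R := Polynomial.X with hv
  set d : Fin 2 → R := ![u, v] with hd
  set D : Matrix (Fin 2) (Fin 2) R := Matrix.diagonal d with hD
  set N : Matrix (Fin 2) (Fin 2) R := Matrix.single 0 1 1 with hN
  set φ : FreeAlgebra K (Fin 2) →ₐ[K] Matrix (Fin 2) (Fin 2) R :=
    FreeAlgebra.lift K ![D, N] with hφ
  have hφX : φ X = D := by rw [hX, hφ, FreeAlgebra.lift_ι_apply]; rfl
  have hφY : φ Y = N := by rw [hY, hφ, FreeAlgebra.lift_ι_apply]; rfl
  have hφaev : ∀ p : Polynomial K,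
      φ (Polynomial.aeval X p) = Matrix.diagonal ![Polynomial.aeval u p, Polynomial.aeval v p] := by
    intro p
    rw [← Polynomial.aeval_algHom_apply φ X p, hφX, hD]
    have h1 : (Matrix.diagonal d : Matrix (Fin 2) (Fin 2) R)
        = Matrix.diagonalAlgHom K d := rfl
    rw [h1, Polynomial.aeval_algHom_apply (Matrix.diagonalAlgHom K) d p]
    have h2 : (Polynomial.aeval d p : Fin 2 → R)
        = ![Polynomial.aeval u p, Polynomial.aeval v p] := by
      funext i
      have h3 := Polynomial.aeval_algHom_apply (Pi.evalAlgHom K (fun _ : Fin 2 => R) i) d p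
      fin_cases i <;> simpa [hd] using h3.symm
    rw [h2]; rfl
  -- apply φ to the key identity
  have mkey := congrArg φ key
  simp only [map_mul, hφaev, hT₁, map_sub, hφX, hφY] at mkey
  -- extract the (0,1) entry
  have entry := congrFun (congrFun mkey 0) 1
  simp [hD, hN, hd, Matrix.mul_apply, Fin.sum_univ_two, Matrix.single,
    Matrix.diagonal_apply] at entry
  -- cancel (v - u)
  have hvu : v - u ≠ 0 := by rw [hu, hv]; exact aux_sub_ne_zero
  have e3 : (v - u) * (Polynomial.aeval u g * Polynomial.aeval v f)
      = (v - u) * (Polynomial.aeval u f * Polynomial.aeval v g) := by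
    linear_combination entry
  have e4 : Polynomial.aeval u g * Polynomial.aeval v f
      = Polynomial.aeval u f * Polynomial.aeval v g := mul_left_cancel₀ hvu e3
  rw [hu, hv, aux_aeval_CX, aux_aeval_X, aux_aeval_CX, aux_aeval_X] at e4
  -- compare coefficients
  set b := f.natDegree with hb
  have hfb : f.coeff b ≠ 0 := by
    rw [hb]; exact Polynomial.leadingCoeff_ne_zero.mpr hf
  have e5 : g * Polynomial.C (f.coeff b) = f * Polynomial.C (g.coeff b) := by
    have e5' := congrArg (fun q => Polynomial.coeff q b) e4
    rw [Polynomial.coeff_C_mul, Polynomial.coeff_C_mul, Polynomial.coeff_map,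
      Polynomial.coeff_map, Polynomial.algebraMap_eq] at e5'
    exact e5'
  have e6 : f.coeff b • g = g.coeff b • f := by
    rw [Polynomial.smul_eq_C_mul, Polynomial.smul_eq_C_mul]
    linear_combination e5
  refine ⟨(f.coeff b)⁻¹ * g.coeff b, ?_⟩
  have hg : g = ((f.coeff b)⁻¹ * g.coeff b) • f := by
    rw [mul_smul, ← e6, smul_smul, inv_mul_cancel₀ hfb, one_smul]
  -- final extensionality
  apply LinearMap.ext
  intro a
  induction a using FreeAlgebra.induction with
  | grade0 r =>
      rw [halg Δ₂ hleib₂ r, LinearMap.smul_apply, halg Δ₁ hleib₁ r, smul_zero]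
  | grade1 x =>
      fin_cases x
      · show Δ₂ (FreeAlgebra.ι K 0) = (((f.coeff b)⁻¹ * g.coeff b) • Δ₁) (FreeAlgebra.ι K 0)
        rw [← hX, LinearMap.smul_apply, hΔ₂X, hΔ₁X, smul_zero]
      · show Δ₂ (FreeAlgebra.ι K 1) = (((f.coeff b)⁻¹ * g.coeff b) • Δ₁) (FreeAlgebra.ι K 1)
        rw [← hY, LinearMap.smul_apply, hΔ₂Y, hΔ₁Y, ← map_smul]
        exact congrArg (Polynomial.aeval X) hg
  | mul a b ha hb =>
      rw [hleib₂, LinearMap.smul_apply, hleib₁, ha, hb, LinearMap.smul_apply,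
        LinearMap.smul_apply, smul_add, smul_mul_assoc, mul_smul_comm]
  | add a b ha hb =>
      rw [map_add, ha, hb, LinearMap.smul_apply, LinearMap.smul_apply, LinearMap.smul_apply,
        map_add, smul_add]
end
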